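/- arXiv:1205.0789 — 6 statements merged into one kernel-verified Lean document; each statement's English description precedes it below -/
import Mathlib

section
/- Singleton-style bound for rank distance codes: any linear code C of dimension k in GF(q^N)^n (n ≤ N) with minimum rank distance d satisfies d ≤ n - k + 1. -/
/-!
The rank of the coordinate matrix of `x` is at most its number of nonzero columns, i.e. the
Hamming weight of `x`. A code of dimension `k` contains a nonzero word vanishing on any `k - 1`
prescribed coordinates, and that word has Hamming weight at most `n - k + 1`.
-/

open Module

namespace Submodule

variable {L ι : Type*} [DivisionRing L] [Fintype ι]

theorem exists_ne_zero_forall_eq_zero_of_card_lt (C : Submodule L (ι → L)) (s : Finset ι)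
    (hs : s.card < finrank L C) : ∃ x ∈ C, x ≠ 0 ∧ ∀ i ∈ s, x i = 0 := by
  let restrict : C →ₗ[L] (s → L) :=
    LinearMap.pi (fun i : s => LinearMap.proj (i : ι)) ∘ₗ C.subtype
  have hker : LinearMap.ker restrict ≠ ⊥ :=
    LinearMap.ker_ne_bot_of_finrank_lt (by simpa using hs)
  obtain ⟨⟨x, hxC⟩, hx, hx0⟩ := exists_mem_ne_zero_of_ne_bot hker
  refine ⟨x, hxC, fun h => hx0 (Subtype.ext h), fun i hi => ?_⟩
  exact congrFun (LinearMap.mem_ker.mp hx) ⟨i, hi⟩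

/-- The Singleton bound for the Hamming metric. -/
theorem exists_hammingNorm_add_finrank_le [DecidableEq L] (C : Submodule L (ι → L)) (hC : C ≠ ⊥) :
    ∃ x ∈ C, x ≠ 0 ∧ hammingNorm x + finrank L C ≤ Fintype.card ι + 1 := by
  classical
  have hpos : 1 ≤ finrank L C := one_le_finrank_iff.mpr hC
  have hle : finrank L C ≤ Fintype.card ι := by
    simpa using C.finrank_le
  obtain ⟨s, -, hs⟩ :=
    Finset.exists_subset_card_eq (s := (Finset.univ : Finset ι)) (n := finrank L C - 1)
      (by rw [Finset.card_univ]; omega)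
  obtain ⟨x, hxC, hx, hxs⟩ := C.exists_ne_zero_forall_eq_zero_of_card_lt s (by omega)
  have hsupp : ({i | x i ≠ 0} : Finset ι) ⊆ sᶜ := fun i hi =>
    Finset.mem_compl.mpr fun his => (Finset.mem_filter.mp hi).2 (hxs i his)
  have hwt : hammingNorm x ≤ Fintype.card ι - s.card :=
    (Finset.card_le_card hsupp).trans (Finset.card_compl s).le
  exact ⟨x, hxC, hx, by omega⟩

end Submodule

theorem Module.Basis.rank_of_repr_le_hammingNorm {K L ι κ : Type*} [Field K] [Field L] [Algebra K L]
    [Fintype ι] [Fintype κ] [DecidableEq L] (b : Basis ι K L) (x : κ → L) :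
    (Matrix.of fun i j => b.repr (x j) i).rank ≤ hammingNorm x := by
  rw [← Matrix.rank_transpose]
  refine Matrix.rank_le_card_of_support_subset _ _ fun j hj => ?_
  simpa using fun hxj : x j = 0 => hj (by ext i; simp [hxj])

theorem stmt3_general (K L : Type*) [Field K] [Field L] [Algebra K L] (N n k d : ℕ)
    (b : Module.Basis (Fin N) K L)
    (M : (Fin n → L) → Matrix (Fin N) (Fin n) K)
    (hM : ∀ x i j, M x i j = b.repr (x j) i)
    (C : Submodule L (Fin n → L)) (hk : Module.finrank L C = k)
    (hd : IsLeast {m : ℕ | ∃ x ∈ C, x ≠ 0 ∧ (M x).rank = m} d) :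
    d ≤ n - k + 1 := by
  classical
  obtain ⟨x₀, hx₀C, hx₀, -⟩ := hd.1
  obtain ⟨x, hxC, hx, hwt⟩ :=
    C.exists_hammingNorm_add_finrank_le ((C.ne_bot_iff).mpr ⟨x₀, hx₀C, hx₀⟩)
  have hMx : M x = Matrix.of fun i j => b.repr (x j) i := Matrix.ext (hM x)
  rw [hk, Fintype.card_fin] at hwt
  calc d ≤ (M x).rank := hd.2 ⟨x, hxC, hx, rfl⟩
    _ ≤ hammingNorm x := hMx ▸ b.rank_of_repr_le_hammingNorm x
    _ ≤ n - k + 1 := by omega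

/-- Singleton-style bound for rank distance codes: a linear code `C` of
dimension `k` in `GF(q^N)^n` (with `n ≤ N`) whose minimum rank distance is `d`
satisfies `d ≤ n - k + 1`. -/
theorem stmt3 (K L : Type*) [Field K] [Field L] [Algebra K L] (N n k d : ℕ) (hn : n ≤ N)
    (b : Module.Basis (Fin N) K L)
    (M : (Fin n → L) → Matrix (Fin N) (Fin n) K)
    (hM : ∀ x i j, M x i j = b.repr (x j) i)
    (C : Submodule L (Fin n → L)) (hk : Module.finrank L C = k)
    (hd : IsLeast {m : ℕ | ∃ x ∈ C, x ≠ 0 ∧ (M x).rank = m} d) :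
    d ≤ n - k + 1 :=
  stmt3_general K L N n k d b M hM C hk hd
end

section
/- A linear code Γ ⊆ F^n is an LCD code (i.e., Γ ∩ Γ^⊥ = {0}) if and only if the k×k matrix G G^T is nonsingular, where G is a generator matrix of Γ whose k rows form a basis of Γ. -/
/-!
The dual of the row space of `G` is the kernel of `G`, and `G (cG)ᵀ = (G Gᵀ) c`; hence
`Γ ∩ Γ^⊥` is the image of `ker (G Gᵀ)` under the injective map `c ↦ cG`, which vanishes
exactly when `G Gᵀ` is invertible.
-/

/-- The dual code of a linear code `Γ ⊆ F^n` with respect to the standard bilinear form. -/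
def dualCode {F : Type*} [Field F] {n : ℕ} (Γ : Submodule F (Fin n → F)) :
    Submodule F (Fin n → F) where
  carrier := {v | ∀ u ∈ Γ, dotProduct u v = 0}
  zero_mem' := fun u _ => dotProduct_zero u
  add_mem' := by
    intro a b ha hb u hu
    rw [dotProduct_add, ha u hu, hb u hu, add_zero]
  smul_mem' := by
    intro c v hv u hu
    rw [dotProduct_smul, hv u hu, smul_zero]

section RowSpace

open Matrix Submodule

variable {F : Type*} [Field F] {m : Type*} {n : ℕ}

theorem mem_dualCode_span_rows_iff (G : Matrix m (Fin n) F) (v : Fin n → F) :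
    v ∈ dualCode (span F (Set.range fun i => G i)) ↔ G *ᵥ v = 0 := by
  refine ⟨fun hv => funext fun i => hv _ (subset_span ⟨i, rfl⟩), fun hGv u hu => ?_⟩
  induction hu using span_induction with
  | mem u hu =>
    obtain ⟨i, rfl⟩ := hu
    exact congrFun hGv i
  | zero => exact zero_dotProduct v
  | add u w _ _ hu hw => rw [add_dotProduct, hu, hw, add_zero]
  | smul c u _ hu => rw [smul_dotProduct, hu, smul_zero]

theorem span_rows_inf_dualCode [Fintype m] (G : Matrix m (Fin n) F) :
    span F (Set.range fun i => G i) ⊓ dualCode (span F (Set.range fun i => G i)) =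
      (LinearMap.ker (G * Gᵀ).mulVecLin).map G.vecMulLinear := by
  have hGGt (c : m → F) : G *ᵥ (c ᵥ* G) = (G * Gᵀ) *ᵥ c := by
    rw [← mulVec_transpose, mulVec_mulVec]
  ext v
  rw [mem_inf, mem_dualCode_span_rows_iff, ← row_def, ← range_vecMulLinear]
  constructor
  · rintro ⟨⟨c, rfl⟩, hc⟩
    exact ⟨c, by simpa [hGGt] using hc, rfl⟩
  · rintro ⟨c, hc, rfl⟩
    exact ⟨⟨c, rfl⟩, by simpa [hGGt] using hc⟩

end RowSpace

theorem stmt5_general (F : Type*) [Field F] (n k : ℕ)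
    (G : Matrix (Fin k) (Fin n) F)
    (hG : LinearIndependent F (fun i => G i))
    (Γ : Submodule F (Fin n → F))
    (hΓ : Γ = Submodule.span F (Set.range fun i => G i)) :
    Γ ⊓ dualCode Γ = ⊥ ↔ IsUnit (G * G.transpose).det := by
  have hinj : Function.Injective G.vecMulLinear := Matrix.vecMul_injective_iff.mpr hG
  rw [hΓ, span_rows_inf_dualCode, ← Submodule.map_bot G.vecMulLinear,
    (Submodule.map_injective_of_injective hinj).eq_iff, LinearMap.ker_eq_bot,
    Matrix.coe_mulVecLin, Matrix.mulVec_injective_iff_isUnit, Matrix.isUnit_iff_isUnit_det]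

/-- A linear code `Γ ⊆ F^n` with generator matrix `G` (rows a basis of `Γ`)
is an LCD code (`Γ ∩ Γ^⊥ = {0}`) if and only if `G * Gᵀ` is nonsingular. -/
theorem stmt5 (F : Type*) [Field F] [Fintype F] (n k : ℕ)
    (G : Matrix (Fin k) (Fin n) F)
    (hG : LinearIndependent F (fun i => G i))
    (Γ : Submodule F (Fin n → F))
    (hΓ : Γ = Submodule.span F (Set.range fun i => G i)) :
    Γ ⊓ dualCode Γ = ⊥ ↔ IsUnit (G * G.transpose).det :=
  stmt5_general F n k G hG Γ hΓ
end

section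
/- If Γ is an LCD code with generator matrix G, then Π = G^T (G G^T)^{-1} G is the orthogonal projector from F^n onto Γ: for all v ∈ F^n, vΠ ∈ Γ, vΠ = v iff v ∈ Γ, and v - vΠ ∈ Γ^⊥. -/
namespace Matrix

variable {R : Type*} [CommRing R] {m n : Type*} [Fintype m] [Fintype n] [DecidableEq m]

noncomputable def projMatrix (G : Matrix m n R) : Matrix n n R :=
  Gᵀ * (G * Gᵀ)⁻¹ * G

lemma transpose_projMatrix (G : Matrix m n R) : (projMatrix G)ᵀ = projMatrix G := by
  simp only [projMatrix, transpose_mul, transpose_nonsing_inv, transpose_transpose,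
    Matrix.mul_assoc]

lemma mul_projMatrix {G : Matrix m n R} (hG : IsUnit (G * Gᵀ).det) : G * projMatrix G = G := by
  rw [projMatrix, ← Matrix.mul_assoc, ← Matrix.mul_assoc, mul_nonsing_inv _ hG, Matrix.one_mul]

lemma vecMul_projMatrix_mem_range (G : Matrix m n R) (v : n → R) :
    v ᵥ* projMatrix G ∈ LinearMap.range G.vecMulLinear :=
  ⟨v ᵥ* (Gᵀ * (G * Gᵀ)⁻¹), by rw [vecMulLinear_apply, vecMul_vecMul, projMatrix]⟩

lemma vecMul_projMatrix_of_mem_range {G : Matrix m n R} (hG : IsUnit (G * Gᵀ).det) {u : n → R}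
    (hu : u ∈ LinearMap.range G.vecMulLinear) : u ᵥ* projMatrix G = u := by
  obtain ⟨c, rfl⟩ := hu
  rw [vecMulLinear_apply, vecMul_vecMul, mul_projMatrix hG]

/-- `Π` is symmetric and fixes the row space of `G`, so `u ⬝ᵥ vΠ = uΠ ⬝ᵥ v = u ⬝ᵥ v` there. -/
lemma dotProduct_sub_vecMul_projMatrix {G : Matrix m n R} (hG : IsUnit (G * Gᵀ).det)
    {u : n → R} (hu : u ∈ LinearMap.range G.vecMulLinear) (v : n → R) :
    u ⬝ᵥ (v - v ᵥ* projMatrix G) = 0 := by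
  have hsymm : v ᵥ* projMatrix G = projMatrix G *ᵥ v := by
    rw [← vecMul_transpose, transpose_projMatrix]
  rw [dotProduct_sub, hsymm, dotProduct_mulVec, vecMul_projMatrix_of_mem_range hG hu, sub_self]

end Matrix

open Matrix

theorem stmt7_general (F : Type*) [Field F] (n k : ℕ)
    (G : Matrix (Fin k) (Fin n) F)
    (hLCD : IsUnit (G * G.transpose).det)
    (Γ : Submodule F (Fin n → F))
    (hΓ : Γ = Submodule.span F (Set.range fun i => G i))
    (P : Matrix (Fin n) (Fin n) F)
    (hP : P = G.transpose * (G * G.transpose)⁻¹ * G) :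
    ∀ v : Fin n → F,
      Matrix.vecMul v P ∈ Γ ∧
      (Matrix.vecMul v P = v ↔ v ∈ Γ) ∧
      v - Matrix.vecMul v P ∈ dualCode Γ := by
  intro v
  have hΓ_range : Γ = LinearMap.range G.vecMulLinear := by rw [hΓ, range_vecMulLinear]; rfl
  have hP_proj : P = projMatrix G := hP
  subst hΓ_range hP_proj
  exact ⟨vecMul_projMatrix_mem_range G v,
    ⟨fun h => h ▸ vecMul_projMatrix_mem_range G v, vecMul_projMatrix_of_mem_range hLCD⟩,
    fun u hu => dotProduct_sub_vecMul_projMatrix hLCD hu v⟩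

/-- If `Γ` is an LCD code with generator matrix `G`, then
`P = Gᵀ (G Gᵀ)⁻¹ G` is the orthogonal projector from `F^n` onto `Γ`: `vP ∈ Γ`,
`vP = v` iff `v ∈ Γ`, and `v - vP ∈ Γ^⊥`. -/
theorem stmt7 (F : Type*) [Field F] [Fintype F] (n k : ℕ)
    (G : Matrix (Fin k) (Fin n) F)
    (hG : LinearIndependent F (fun i => G i))
    (hLCD : IsUnit (G * G.transpose).det)
    (Γ : Submodule F (Fin n → F))
    (hΓ : Γ = Submodule.span F (Set.range fun i => G i))
    (P : Matrix (Fin n) (Fin n) F)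
    (hP : P = G.transpose * (G * G.transpose)⁻¹ * G) :
    ∀ v : Fin n → F,
      Matrix.vecMul v P ∈ Γ ∧
      (Matrix.vecMul v P = v ↔ v ∈ Γ) ∧
      v - Matrix.vecMul v P ∈ dualCode Γ :=
  stmt7_general F n k G hLCD Γ hΓ P hP
end

section
/- The minimum distance of the concatenated rank-metric (CRM) code equals the minimum rank distance of the outer code: if the outer code A ⊆ GF(2^{k_b})^{n_a} has minimum rank distance d_a, and the inner encoding appends parity bits via an injective GF(2)-linear map from GF(2)^{k_b} to GF(2)^{n_b} applied to each row of the coordinate matrix, then the minimum of rank(CCM(m)) over nonzero messages m equals d_a. -/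
theorem Matrix.rank_map_rows_of_injective {K m n p : Type*} [Field K] [Finite m] [Fintype n]
    [Fintype p] (M : Matrix m n K) (f : (n → K) →ₗ[K] (p → K)) (hf : Function.Injective f) :
    (Matrix.of fun i => f (M i)).rank = M.rank := by
  rw [Matrix.rank_eq_finrank_span_row, Matrix.rank_eq_finrank_span_row,
    show Set.range (Matrix.of fun i => f (M i)).row = f '' Set.range M.row from
      Set.range_comp f M, ← Submodule.map_span]
  exact (Submodule.equivMapOfInjective f hf _).finrank_eq.symm

theorem stmt13_general (kb nb na da : ℕ)
    (L : Type*) [Field L]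
    (A : Submodule L (Fin na → L))
    (E : (Fin kb → ZMod 2) →ₗ[ZMod 2] (Fin nb → ZMod 2))
    (hEinj : Function.Injective E)
    (B : (Fin na → L) → Matrix (Fin na) (Fin kb) (ZMod 2))
    (CCM : (Fin na → L) → Matrix (Fin na) (Fin nb) (ZMod 2))
    (hCCM : ∀ a i, CCM a i = E (B a i))
    (hda : IsLeast {m : ℕ | ∃ a ∈ A, a ≠ 0 ∧ (B a).rank = m} da) :
    IsLeast {m : ℕ | ∃ a ∈ A, a ≠ 0 ∧ (CCM a).rank = m} da := by
  have hrank (a : Fin na → L) : (CCM a).rank = (B a).rank := by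
    rw [show CCM a = Matrix.of fun i => E (B a i) from funext (hCCM a)]
    exact (B a).rank_map_rows_of_injective E hEinj
  simpa only [hrank] using hda

/-- The minimum distance of the concatenated rank-metric (CRM) code equals the
minimum rank distance of the outer code: if the outer code `A ⊆ GF(2^{k_b})^{n_a}` has
minimum rank distance `d_a` (minimum over nonzero codewords of the rank of the
`n_a × k_b` binary coordinate matrix `B a`), and the inner encoding applies an injective
systematic `GF(2)`-linear map `E : GF(2)^{k_b} → GF(2)^{n_b}` to each row, then the minimum
of `rank (CCM a)` over nonzero codewords `a ∈ A` equals `d_a`. -/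
theorem stmt13 (kb nb na da : ℕ) (hkb : kb ≤ nb)
    (L : Type*) [Field L] [Algebra (ZMod 2) L]
    (bL : Module.Basis (Fin kb) (ZMod 2) L)
    (A : Submodule L (Fin na → L))
    (E : (Fin kb → ZMod 2) →ₗ[ZMod 2] (Fin nb → ZMod 2))
    (hEinj : Function.Injective E)
    (hEsys : ∀ (v : Fin kb → ZMod 2) (j : Fin kb), E v (Fin.castLE hkb j) = v j)
    (B : (Fin na → L) → Matrix (Fin na) (Fin kb) (ZMod 2))
    (hB : ∀ a i j, B a i j = bL.repr (a i) j)
    (CCM : (Fin na → L) → Matrix (Fin na) (Fin nb) (ZMod 2))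
    (hCCM : ∀ a i, CCM a i = E (B a i))
    (hda : IsLeast {m : ℕ | ∃ a ∈ A, a ≠ 0 ∧ (B a).rank = m} da) :
    IsLeast {m : ℕ | ∃ a ∈ A, a ≠ 0 ∧ (CCM a).rank = m} da :=
  stmt13_general kb nb na da L A E hEinj B CCM hCCM hda
end

section
/- The q-power parity-check matrix has full rank on independent vectors: let h_1,...,h_n ∈ GF(q^N) be linearly independent over GF(q) and let H be the (d-1)×n matrix with entries H_{ij} = h_j^{q^i}, i = 0,...,d-2, d ≤ n. Then for any n×(d-1) matrix M over GF(q) of rank d-1, the (d-1)×(d-1) matrix H·M is nonsingular over GF(q^N). -/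
open Polynomial Module

/-- A Moore matrix built from `GF(q)`-linearly independent elements is nonsingular. -/
lemma moore_det_ne_zero {K L : Type*} [Field K] [Fintype K] [Field L] [Algebra K L]
    {m : ℕ} (f : Fin m → L) (hf : LinearIndependent K f) :
    (Matrix.of fun i l : Fin m => f l ^ (Fintype.card K) ^ (i : ℕ)).det ≠ 0 := by
  classical
  have hq1 : 1 < Fintype.card K := Fintype.one_lt_card
  obtain ⟨p, hp⟩ := CharP.exists K
  haveI := hp
  obtain ⟨s, hps, hcard⟩ := FiniteField.card K p
  haveI : Fact p.Prime := ⟨hps⟩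
  haveI : CharP L p := charP_of_injective_algebraMap (algebraMap K L).injective p
  intro hdet
  obtain ⟨v, hv0, hvA⟩ := Matrix.exists_vecMul_eq_zero_iff.mpr hdet
  obtain ⟨i0, hi0⟩ := Function.ne_iff.mp hv0
  simp only [Pi.zero_apply] at hi0
  set P : L[X] := ∑ i : Fin m, C (v i) * X ^ ((Fintype.card K) ^ (i : ℕ)) with hP
  have hPeval : ∀ x : L, P.eval x = ∑ i : Fin m, v i * x ^ (Fintype.card K) ^ (i : ℕ) := by
    intro x; simp [hP, eval_finset_sum]
  have hPne : P ≠ 0 := by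
    intro h0
    have hc : P.coeff ((Fintype.card K) ^ (i0 : ℕ)) = v i0 := by
      rw [hP, finset_sum_coeff, Finset.sum_eq_single i0]
      · simp [coeff_C_mul, coeff_X_pow]
      · intro b _ hb
        simp only [coeff_C_mul, coeff_X_pow]
        rw [if_neg, mul_zero]
        intro hEq
        exact hb (Fin.ext (Nat.pow_right_injective hq1 hEq.symm))
      · intro hnot; exact absurd (Finset.mem_univ i0) hnot
    rw [h0, coeff_zero] at hc
    exact hi0 hc.symm
  -- the evaluation map is K-linear
  have hadd : ∀ (i : Fin m) (x y : L),
      (x + y) ^ (Fintype.card K) ^ (i : ℕ) =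
        x ^ (Fintype.card K) ^ (i : ℕ) + y ^ (Fintype.card K) ^ (i : ℕ) := by
    intro i x y
    have hpow : (Fintype.card K) ^ (i : ℕ) = p ^ ((s : ℕ) * (i : ℕ)) := by
      rw [hcard, ← pow_mul]
    rw [hpow, add_pow_char_pow]
  have hsmul : ∀ (i : Fin m) (c : K) (x : L),
      (c • x) ^ (Fintype.card K) ^ (i : ℕ) = c • x ^ (Fintype.card K) ^ (i : ℕ) := by
    intro i c x
    rw [Algebra.smul_def, Algebra.smul_def, mul_pow, ← map_pow,
      FiniteField.pow_card_pow]
  let g : L →ₗ[K] L :=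
    { toFun := fun x => ∑ i : Fin m, v i * x ^ (Fintype.card K) ^ (i : ℕ)
      map_add' := by
        intro x y
        simp [hadd, mul_add, Finset.sum_add_distrib]
      map_smul' := by
        intro c x
        simp only [hsmul, RingHom.id_apply, Finset.smul_sum, mul_smul_comm] }
  have hroot : ∀ x : L, x ∈ Submodule.span K (Set.range f) → P.eval x = 0 := by
    intro x hx
    have hle : Submodule.span K (Set.range f) ≤ LinearMap.ker g := by
      rw [Submodule.span_le]
      rintro _ ⟨l, rfl⟩
      have := congrFun hvA l
      simpa [Matrix.vecMul, dotProduct, g] using this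
    have := hle hx
    rw [LinearMap.mem_ker] at this
    rw [hPeval]
    exact this
  -- counting
  set W := Submodule.span K (Set.range f) with hW
  haveI : Module.Finite K W := FiniteDimensional.span_of_finite K (Set.finite_range f)
  haveI : Finite W := Module.finite_of_finite K
  haveI : Fintype W := Fintype.ofFinite W
  have hcardW : Fintype.card W = (Fintype.card K) ^ m := by
    rw [card_eq_pow_finrank (K := K), finrank_span_eq_card hf, Fintype.card_fin]
  set Z : Finset L := Finset.univ.image (Subtype.val : W → L) with hZ
  have hZcard : Z.card = (Fintype.card K) ^ m := by
    rw [hZ, Finset.card_image_of_injective _ Subtype.val_injective, Finset.card_univ, hcardW]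
  have hsub : Z.val ⊆ P.roots := by
    intro a ha
    rw [Polynomial.mem_roots hPne]
    rw [hZ] at ha
    simp only [Finset.mem_val, Finset.mem_image, Finset.mem_univ, true_and] at ha
    obtain ⟨⟨x, hxW⟩, rfl⟩ := ha
    exact hroot x hxW
  have hdeg : P.natDegree ≤ (Fintype.card K) ^ (m - 1) := by
    rw [hP]
    apply natDegree_sum_le_of_forall_le
    intro i _
    refine le_trans (natDegree_C_mul_le _ _) ?_
    rw [natDegree_X_pow]
    exact Nat.pow_le_pow_right (le_of_lt hq1) (by omega)
  have hcount := (Polynomial.card_le_degree_of_subset_roots hsub).trans hdeg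
  rw [hZcard] at hcount
  have hm : 0 < m := i0.pos
  have : (Fintype.card K) ^ (m - 1) < (Fintype.card K) ^ m :=
    Nat.pow_lt_pow_right hq1 (by omega)
  omega

/-- The q-power parity-check matrix has full rank on independent vectors: if
`h₁,...,hₙ ∈ GF(q^N)` are linearly independent over `GF(q)` and `H` is the `(d-1) × n`
matrix with entries `h_j^{q^i}` (`i = 0,...,d-2`, `d ≤ n`), then for any `n × (d-1)` matrix
`M` over `GF(q)` of rank `d-1`, the `(d-1) × (d-1)` matrix `H·M` is nonsingular. -/
theorem stmt16 (q d n : ℕ) (hd : d ≤ n)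
    (K L : Type*) [Field K] [Fintype K] [Field L] [Algebra K L]
    (hq : Fintype.card K = q)
    (h : Fin n → L) (hind : LinearIndependent K h)
    (H : Matrix (Fin (d - 1)) (Fin n) L)
    (hH : ∀ (i : Fin (d - 1)) (j : Fin n), H i j = h j ^ q ^ (i : ℕ))
    (M : Matrix (Fin n) (Fin (d - 1)) K) (hM : M.rank = d - 1) :
    IsUnit (H * M.map (algebraMap K L)).det := by
  classical
  subst hq
  obtain ⟨p, hp⟩ := CharP.exists K
  haveI := hp
  obtain ⟨s, hps, hcard⟩ := FiniteField.card K p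
  haveI : Fact p.Prime := ⟨hps⟩
  haveI : CharP L p := charP_of_injective_algebraMap (algebraMap K L).injective p
  set f : Fin (d - 1) → L := fun l => ∑ j, M j l • h j with hf
  -- kernel of mulVecLin is trivial
  have hker : LinearMap.ker M.mulVecLin = ⊥ := by
    have h1 := LinearMap.finrank_range_add_finrank_ker M.mulVecLin
    rw [Matrix.rank] at hM
    rw [hM, Module.finrank_pi, Fintype.card_fin] at h1
    have h2 : Module.finrank K (LinearMap.ker M.mulVecLin) = 0 := by omega
    exact Submodule.finrank_eq_zero.mp h2
  have hfind : LinearIndependent K f := by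
    rw [Fintype.linearIndependent_iff]
    intro c hc
    have h2 : ∀ j, M.mulVec c j = 0 := by
      have key : ∑ j, (M.mulVec c j) • h j = 0 := by
        calc ∑ j, (M.mulVec c j) • h j
            = ∑ j, ∑ l, (c l * M j l) • h j := by
              simp [Matrix.mulVec, dotProduct, Finset.sum_smul, mul_comm]
          _ = ∑ l, ∑ j, (c l * M j l) • h j := Finset.sum_comm
          _ = ∑ l, c l • f l := by simp [hf, Finset.smul_sum, smul_smul]
          _ = 0 := hc
      exact Fintype.linearIndependent_iff.mp hind _ key
    have hmem : c ∈ LinearMap.ker M.mulVecLin := by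
      rw [LinearMap.mem_ker]
      ext j
      exact h2 j
    rw [hker, Submodule.mem_bot] at hmem
    exact fun l => congrFun hmem l
  have hmat : H * M.map (algebraMap K L) =
      Matrix.of fun (i l : Fin (d - 1)) => f l ^ (Fintype.card K) ^ (i : ℕ) := by
    ext i l
    have hpow : (Fintype.card K) ^ (i : ℕ) = p ^ ((s : ℕ) * (i : ℕ)) := by rw [hcard, ← pow_mul]
    simp only [Matrix.mul_apply, Matrix.map_apply, Matrix.of_apply, hH, hf]
    rw [hpow, sum_pow_char_pow]
    congr 1
    ext j
    rw [Algebra.smul_def, mul_pow, ← hpow, ← map_pow, FiniteField.pow_card_pow, mul_comm]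
  rw [hmat, isUnit_iff_ne_zero]
  exact moore_det_ne_zero f hfind
end

section
/- Minimum rank distance of the code with q-power parity-check matrix: the linear code C = {x ∈ GF(q^n)^n : H x^T = 0}, where H is the (d-1)×n matrix with entries h_j^{q^i} (i = 0,...,d-2) for h_1,...,h_n ∈ GF(q^n) linearly independent over GF(q), contains no nonzero codeword of rank norm less than d; hence its minimum rank distance is at least d. -/
/-!
Write `x = C b`, where `b` is a `K`-basis of the span of the coordinates of `x` and `C` is a
`K`-matrix with independent columns. Frobenius powers are `K`-linear, so `H x = 0` becomes
`M b = 0` for the Moore matrix `M` of the independent elements `g = Cᵀ h`. A square Moore matrix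
of independent elements is invertible: a relation `c` between its rows gives the linearized
polynomial `∑ cᵢ X ^ q ^ i`, of degree `< q ^ m`, vanishing on the `q ^ m` elements of the span of
`g`. So if the rank `m` of `x` is at most `d - 1`, then `b = 0` and `x = 0`.
-/

open FiniteField Polynomial Matrix Module Submodule

theorem LinearIndependent.sum_smul_of_linearIndependent_col {R M ι κ : Type*} [Ring R]
    [AddCommGroup M] [Module R M] [Fintype ι] {v : ι → M} (hv : LinearIndependent R v)
    {C : Matrix ι κ R} (hC : LinearIndependent R C.col) :
    LinearIndependent R fun k => ∑ j, C j k • v j :=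
  hC.map' (Fintype.linearCombination R v)
    (LinearMap.ker_eq_bot.2 hv.fintypeLinearCombination_injective)

theorem exists_linearIndependent_col_sum_smul {R V ι : Type*} [Field R] [AddCommGroup V]
    [Module R V] [Fintype ι] (x : ι → V) :
    ∃ (C : Matrix ι (Fin (finrank R (span R (Set.range x)))) R) (b : Fin (finrank R (span R (Set.range x))) → V),
      LinearIndependent R C.col ∧ ∀ j, x j = ∑ k, C j k • b k := by
  set S := span R (Set.range x)
  have := FiniteDimensional.span_of_finite R (Set.finite_range x)
  let e := Module.finBasis R S
  have hxS : ∀ j, x j ∈ S := fun j => subset_span ⟨j, rfl⟩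
  refine ⟨Matrix.of fun j k => e.repr ⟨x j, hxS j⟩ k, fun k => e k, ?_, fun j => ?_⟩
  · rw [Fintype.linearIndependent_iff]
    intro t ht
    -- the functional `∑ t k • e.coord k` vanishes on the spanning family `x`, hence everywhere
    let φ : S →ₗ[R] R := ∑ k, t k • e.coord k
    have hφ : φ = 0 := by
      refine LinearMap.ext_on (span_span_coe_preimage (s := Set.range x)) ?_
      rintro ⟨_, _⟩ ⟨j, rfl⟩
      simpa [φ, mul_comm] using congrFun ht j
    intro k
    simpa [φ, Finsupp.single_apply] using LinearMap.congr_fun hφ (e k)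
  · have := congrArg Subtype.val (e.sum_repr ⟨x j, hxS j⟩)
    rw [Submodule.coe_sum] at this
    simpa only [of_apply, Submodule.coe_smul] using this.symm

section MooreMatrix

variable {K L : Type*} [Field K] [Fintype K] [Field L] [Algebra K L]

theorem FiniteField.frobeniusAlgHom_pow_apply (i : ℕ) (x : L) :
    (frobeniusAlgHom K L ^ i) x = x ^ Fintype.card K ^ i := by
  rw [AlgHom.coe_pow, coe_frobeniusAlgHom, pow_iterate]

variable (K) in
def mooreMatrix {ι : Type*} (r : ℕ) (g : ι → L) : Matrix (Fin r) ι L :=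
  Matrix.of fun i k => g k ^ Fintype.card K ^ (i : ℕ)

theorem mooreMatrix_mul_map_algebraMap {ι κ : Type*} [Fintype ι] (r : ℕ) (g : ι → L)
    (C : Matrix ι κ K) :
    mooreMatrix K r g * C.map (algebraMap K L) = mooreMatrix K r fun k => ∑ j, C j k • g j := by
  ext i k
  simp only [mooreMatrix, mul_apply, of_apply, map_apply]
  rw [eq_comm, ← frobeniusAlgHom_pow_apply, map_sum]
  simp only [map_smul]
  simp only [frobeniusAlgHom_pow_apply, Algebra.smul_def, mul_comm]

theorem eq_zero_of_sum_mul_pow_card_pow_eq_zero {m : ℕ} {g : Fin m → L}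
    (hg : LinearIndependent K g) (c : Fin m → L)
    (hc : ∀ k, ∑ i, c i * g k ^ Fintype.card K ^ (i : ℕ) = 0) : c = 0 := by
  have hq : 1 < Fintype.card K := Fintype.one_lt_card
  set f : L[X] := ∑ i : Fin m, C (c i) * X ^ Fintype.card K ^ (i : ℕ)
  -- evaluating `f` is the `K`-linear map `P`, which kills every `g k`, hence the span of `g`
  let P : L →ₗ[K] L := ∑ i, c i • (frobeniusAlgHom K L ^ (i : ℕ)).toLinearMap
  have hfP : ∀ y, f.eval y = P y := fun y => by
    simp only [f, P, eval_finsetSum, eval_mul, eval_C, eval_pow, eval_X, LinearMap.sum_apply,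
      LinearMap.smul_apply, AlgHom.toLinearMap_apply, frobeniusAlgHom_pow_apply,
      smul_eq_mul]
  have hroots : ∀ t : Fin m → K, f.eval (Fintype.linearCombination K g t) = 0 := by
    have hPg : ∀ k, P (g k) = 0 := fun k => by rw [← hfP, ← hc k]; simp [f, eval_finsetSum]
    simp [hfP, Fintype.linearCombination_apply, hPg]
  have hdeg : f.degree < (Finset.univ : Finset (Fin m → K)).card := by
    rw [Finset.card_univ, Fintype.card_fun, Fintype.card_fin, ← mem_degreeLT]
    refine Submodule.sum_mem _ fun i _ => mem_degreeLT.2 ((degree_C_mul_X_pow_le _ _).trans_lt ?_)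
    exact_mod_cast Nat.pow_lt_pow_right hq i.2
  have hf : f = 0 := eq_zero_of_degree_lt_of_eval_index_eq_zero _
    hg.fintypeLinearCombination_injective.injOn hdeg fun t _ => hroots t
  funext i
  calc c i = f.coeff (Fintype.card K ^ (i : ℕ)) := by
        simp only [f, finsetSum_coeff, coeff_C_mul_X_pow, (Nat.pow_right_injective hq).eq_iff,
          Fin.val_inj, Finset.sum_ite_eq, Finset.mem_univ, if_true]
    _ = 0 := by rw [hf, coeff_zero]

theorem isUnit_mooreMatrix {m : ℕ} {g : Fin m → L} (hg : LinearIndependent K g) :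
    IsUnit (mooreMatrix K m g) := by
  rw [← linearIndependent_rows_iff_isUnit, Fintype.linearIndependent_iff]
  intro c hc
  refine congrFun (eq_zero_of_sum_mul_pow_card_pow_eq_zero hg c fun k => ?_)
  simpa [mooreMatrix, Finset.sum_apply] using congrFun hc k

theorem eq_zero_of_mooreMatrix_mulVec_eq_zero {m r : ℕ} {g : Fin m → L}
    (hg : LinearIndependent K g) (hmr : m ≤ r) {b : Fin m → L}
    (hb : mooreMatrix K r g *ᵥ b = 0) : b = 0 := by
  refine (mulVec_injective_iff_isUnit.2 (isUnit_mooreMatrix hg)) ?_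
  rw [mulVec_zero]
  exact funext fun i => congrFun hb (Fin.castLE hmr i)

theorem eq_zero_of_mooreMatrix_mulVec_eq_zero_of_finrank_le {ι : Type*} [Fintype ι] {r : ℕ}
    {h : ι → L} (hh : LinearIndependent K h) {x : ι → L} (hx : mooreMatrix K r h *ᵥ x = 0)
    (hrank : finrank K (span K (Set.range x)) ≤ r) : x = 0 := by
  obtain ⟨C, b, hC, hxb⟩ := exists_linearIndependent_col_sum_smul (R := K) x
  have hxCb : x = C.map (algebraMap K L) *ᵥ b := funext fun j => by
    simp [hxb j, mulVec, dotProduct, Algebra.smul_def]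
  have hb : b = 0 := by
    refine eq_zero_of_mooreMatrix_mulVec_eq_zero (hh.sum_smul_of_linearIndependent_col hC) hrank ?_
    rw [← mooreMatrix_mul_map_algebraMap, ← mulVec_mulVec, ← hxCb, hx]
  rw [hxCb, hb, mulVec_zero]

end MooreMatrix

theorem stmt17_general (q d n : ℕ)
    (K L : Type*) [Field K] [Fintype K] [Field L] [Algebra K L]
    (hqK : Fintype.card K = q)
    (h : Fin n → L) (hind : LinearIndependent K h)
    (H : Matrix (Fin (d - 1)) (Fin n) L)
    (hH : ∀ (i : Fin (d - 1)) (j : Fin n), H i j = h j ^ q ^ (i : ℕ)) :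
    ∀ x : Fin n → L, H.mulVec x = 0 → x ≠ 0 →
      d ≤ Module.finrank K (Submodule.span K (Set.range x)) := by
  subst hqK
  intro x hx hx0
  by_contra! hrank
  have hHmoore : H = mooreMatrix K (d - 1) h := Matrix.ext hH
  exact hx0 (eq_zero_of_mooreMatrix_mulVec_eq_zero_of_finrank_le hind (hHmoore ▸ hx) (by omega))

/-- Minimum rank distance of the code with q-power parity-check matrix: the
linear code `C = {x ∈ GF(q^n)^n : H xᵀ = 0}`, where `H` has entries `h_j^{q^i}`
(`i = 0,...,d-2`) with `h₁,...,hₙ ∈ GF(q^n)` linearly independent over `GF(q)`, contains no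
nonzero codeword of rank norm (dimension of the `GF(q)`-span of the coordinates) less than
`d`; hence its minimum rank distance is at least `d`. -/
theorem stmt17 (q d n : ℕ) (hd : d ≤ n)
    (K L : Type*) [Field K] [Fintype K] [Field L] [Fintype L] [Algebra K L]
    (hqK : Fintype.card K = q) (hqL : Fintype.card L = q ^ n)
    (h : Fin n → L) (hind : LinearIndependent K h)
    (H : Matrix (Fin (d - 1)) (Fin n) L)
    (hH : ∀ (i : Fin (d - 1)) (j : Fin n), H i j = h j ^ q ^ (i : ℕ)) :
    ∀ x : Fin n → L, H.mulVec x = 0 → x ≠ 0 →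
      d ≤ Module.finrank K (Submodule.span K (Set.range x)) :=
  stmt17_general q d n K L hqK h hind H hH
end
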